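/- Let H ∈ ℝ^{M×d}, W ∈ ℝ^{p×d} with ‖W‖₂ = 1 and ker(H) ∩ ker(W) = {0}, λ > 0, ε > 0, and let M: ℝ^d → ℝ^{p×p} map into diagonal matrices with ε·Id ⪯ M(x)² ⪯ Id, with x ↦ M(x)² Lipschitz with constant L (spectral norm on matrices). Define λ_ε = λ_min(HᵀH + λε WᵀW) and T(x) = (HᵀH + λ W ᵀM(x)²W)⁻¹Hᵀy. Then for all x₁, x₂: ‖T(x₁) − T(x₂)‖₂ ≤ (λ L ‖Hᵀy‖₂ / λ_ε²)·‖x₁ − x₂‖₂. -/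

import Mathlib

/-! Write `A x = HᵀH + λ Wᵀ M(x)² W`. Since `ε ≤ M(x)²`, in the Loewner order
`λ_ε • 1 ≤ HᵀH + λε WᵀW ≤ A x`, and `λ_ε > 0` because the kernel condition makes
`HᵀH + λε WᵀW` positive definite; hence `‖(A x)⁻¹‖ ≤ λ_ε⁻¹` in the spectral norm. The resolvent
identity `A₁⁻¹ - A₂⁻¹ = A₁⁻¹ (A₂ - A₁) A₂⁻¹` together with
`‖A₂ - A₁‖ ≤ λ ‖W‖² ‖M(x₂)² - M(x₁)²‖` gives the Lipschitz bound. -/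

open Matrix

noncomputable def e {n : ℕ} (v : Fin n → ℝ) : EuclideanSpace ℝ (Fin n) := WithLp.toLp 2 v

noncomputable def specNorm {m n : ℕ} (A : Matrix (Fin m) (Fin n) ℝ) : ℝ :=
  ‖LinearMap.toContinuousLinearMap (Matrix.toEuclideanLin A)‖

open scoped ComplexOrder MatrixOrder Matrix.Norms.L2Operator

namespace Matrix

variable {m n p : Type*} [Fintype m] [Fintype n] [Fintype p]

lemma algebraMap_iInf_eigenvalues_le [DecidableEq n] {𝕜 : Type*} [RCLike 𝕜] {A : Matrix n n 𝕜}
    (hA : A.IsHermitian) : algebraMap ℝ (Matrix n n 𝕜) (⨅ i, hA.eigenvalues i) ≤ A := by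
  rw [algebraMap_le_iff_le_spectrum hA.isSelfAdjoint, hA.spectrum_real_eq_range_eigenvalues]
  rintro _ ⟨i, rfl⟩
  exact ciInf_le (Set.finite_range _).bddBelow i

lemma iInf_eigenvalues_pos [DecidableEq n] [Nonempty n] {𝕜 : Type*} [RCLike 𝕜] {A : Matrix n n 𝕜}
    (hA : A.IsHermitian) (hpos : A.PosDef) : 0 < ⨅ i, hA.eigenvalues i := by
  obtain ⟨i, hi⟩ := exists_eq_ciInf_of_finite (f := hA.eigenvalues)
  exact hi ▸ hpos.eigenvalues_pos i

lemma dotProduct_transpose_mul_self_mulVec (H : Matrix m n ℝ) (v : n → ℝ) :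
    v ⬝ᵥ ((Hᵀ * H) *ᵥ v) = (H *ᵥ v) ⬝ᵥ (H *ᵥ v) := by
  rw [← mulVec_mulVec, dotProduct_mulVec, vecMul_transpose]

lemma dotProduct_self_pos {v : n → ℝ} (hv : v ≠ 0) : 0 < v ⬝ᵥ v := by
  simpa using dotProduct_star_self_pos_iff.mpr hv

lemma posDef_transpose_mul_self_add_smul {H : Matrix m n ℝ} {W : Matrix p n ℝ}
    (hker : ∀ v, H *ᵥ v = 0 → W *ᵥ v = 0 → v = 0) {c : ℝ} (hc : 0 < c) :
    (Hᵀ * H + c • (Wᵀ * W)).PosDef := by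
  have hpsd : (Hᵀ * H + c • (Wᵀ * W)).PosSemidef := by
    simpa only [conjTranspose_eq_transpose_of_trivial] using
      (posSemidef_conjTranspose_mul_self H).add ((posSemidef_conjTranspose_mul_self W).smul hc.le)
  refine PosDef.of_dotProduct_mulVec_pos hpsd.isHermitian fun v hv ↦ ?_
  rw [star_trivial, add_mulVec, smul_mulVec, dotProduct_add, dotProduct_smul, smul_eq_mul,
    dotProduct_transpose_mul_self_mulVec, dotProduct_transpose_mul_self_mulVec]
  by_cases hH : H *ᵥ v = 0
  · have hW : W *ᵥ v ≠ 0 := fun hW ↦ hv (hker v hH hW)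
    rw [hH, zero_dotProduct, zero_add]
    exact mul_pos hc (dotProduct_self_pos hW)
  · have hW := dotProduct_self_star_nonneg (W *ᵥ v)
    rw [star_trivial] at hW
    exact add_pos_of_pos_of_nonneg (dotProduct_self_pos hH) (mul_nonneg hc.le hW)

lemma transpose_mul_mul_le_transpose_mul_mul (W : Matrix p n ℝ) {D E : Matrix p p ℝ}
    (hDE : D ≤ E) : Wᵀ * D * W ≤ Wᵀ * E * W := by
  rw [le_iff, ← Matrix.sub_mul, ← Matrix.mul_sub, ← conjTranspose_eq_transpose_of_trivial]
  exact (le_iff.mp hDE).conjTranspose_mul_mul_same W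

lemma transpose_mul_self_add_smul_le (H : Matrix m n ℝ) (W : Matrix p n ℝ) {lam ε : ℝ}
    (hlam : 0 ≤ lam) [DecidableEq p] {g : p → ℝ} (hg : ∀ i, ε ≤ g i) :
    Hᵀ * H + (lam * ε) • (Wᵀ * W) ≤ Hᵀ * H + lam • (Wᵀ * diagonal g * W) := by
  have hdiag : ε • (1 : Matrix p p ℝ) ≤ diagonal g := by
    rw [smul_one_eq_diagonal, le_iff, diagonal_sub]
    exact PosSemidef.diagonal fun i ↦ sub_nonneg.mpr (hg i)
  have hconst : (lam * ε) • (Wᵀ * W) = lam • (Wᵀ * (ε • 1 : Matrix p p ℝ) * W) := by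
    rw [← smul_smul, Matrix.mul_smul, Matrix.mul_one, Matrix.smul_mul]
  rw [hconst, le_iff, add_sub_add_left_eq_sub, ← smul_sub]
  exact (le_iff.mp (transpose_mul_mul_le_transpose_mul_mul W hdiag)).smul hlam

lemma posDef_of_algebraMap_le [DecidableEq n] {A : Matrix n n ℝ} {c : ℝ} (hc : 0 < c)
    (hA : algebraMap ℝ _ c ≤ A) : A.PosDef := by
  have h := (PosDef.one.smul hc).add_posSemidef (le_iff.mp hA)
  rwa [Algebra.algebraMap_eq_smul_one, add_sub_cancel] at h

lemma norm_toLp_mulVec_le [DecidableEq n] (A : Matrix m n ℝ) (v : n → ℝ) :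
    ‖WithLp.toLp 2 (A *ᵥ v)‖ ≤ ‖A‖ * ‖WithLp.toLp 2 v‖ :=
  A.l2_opNorm_mulVec (WithLp.toLp 2 v)

lemma mul_norm_le_norm_mulVec_of_algebraMap_le [DecidableEq n] {A : Matrix n n ℝ} {c : ℝ}
    (hA : algebraMap ℝ _ c ≤ A) (v : n → ℝ) :
    c * ‖WithLp.toLp 2 v‖ ≤ ‖WithLp.toLp 2 (A *ᵥ v)‖ := by
  have hquad : c * ‖WithLp.toLp 2 v‖ ^ 2 ≤ ‖WithLp.toLp 2 v‖ * ‖WithLp.toLp 2 (A *ᵥ v)‖ := by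
    have := (le_iff.mp hA).dotProduct_mulVec_nonneg v
    rw [star_trivial, sub_mulVec, dotProduct_sub, sub_nonneg, Algebra.algebraMap_eq_smul_one,
      smul_mulVec, one_mulVec, dotProduct_smul, smul_eq_mul] at this
    calc c * ‖WithLp.toLp 2 v‖ ^ 2 = c * (v ⬝ᵥ v) := by
          rw [← real_inner_self_eq_norm_sq, EuclideanSpace.inner_eq_star_dotProduct, star_trivial]
      _ ≤ v ⬝ᵥ (A *ᵥ v) := this
      _ = inner ℝ (WithLp.toLp 2 v) (WithLp.toLp 2 (A *ᵥ v)) := by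
          rw [EuclideanSpace.inner_eq_star_dotProduct, star_trivial, dotProduct_comm]
      _ ≤ _ := real_inner_le_norm _ _
  rcases (norm_nonneg (WithLp.toLp 2 v)).eq_or_lt with h0 | hpos
  · rw [← h0, mul_zero]; exact norm_nonneg _
  · nlinarith

lemma l2_opNorm_inv_le_of_algebraMap_le [DecidableEq n] {A : Matrix n n ℝ} {c : ℝ} (hc : 0 < c)
    (hA : algebraMap ℝ _ c ≤ A) : ‖A⁻¹‖ ≤ c⁻¹ := by
  refine ContinuousLinearMap.opNorm_le_bound _ (inv_nonneg.mpr hc.le) fun x ↦ ?_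
  rw [le_inv_mul_iff₀ hc]
  have hdet := (isUnit_iff_isUnit_det A).mp (posDef_of_algebraMap_le hc hA).isUnit
  simpa [toLpLin_apply, mulVec_mulVec, mul_nonsing_inv _ hdet] using
    mul_norm_le_norm_mulVec_of_algebraMap_le hA (A⁻¹ *ᵥ x.ofLp)

lemma norm_inv_mulVec_sub_inv_mulVec_le [DecidableEq n] {A B : Matrix n n ℝ} {c : ℝ}
    (hc : 0 < c) (hA : algebraMap ℝ _ c ≤ A) (hB : algebraMap ℝ _ c ≤ B) (u : n → ℝ) :
    ‖WithLp.toLp 2 (A⁻¹ *ᵥ u) - WithLp.toLp 2 (B⁻¹ *ᵥ u)‖ ≤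
      ‖B - A‖ * ‖WithLp.toLp 2 u‖ / c ^ 2 := by
  have hunit : IsUnit A ↔ IsUnit B :=
    iff_of_true (posDef_of_algebraMap_le hc hA).isUnit (posDef_of_algebraMap_le hc hB).isUnit
  rw [← WithLp.toLp_sub, ← sub_mulVec, inv_sub_inv hunit]
  calc _ ≤ ‖A⁻¹ * (B - A) * B⁻¹‖ * ‖WithLp.toLp 2 u‖ := norm_toLp_mulVec_le _ _
    _ ≤ c⁻¹ * ‖B - A‖ * c⁻¹ * ‖WithLp.toLp 2 u‖ := by
        gcongr
        refine (norm_mul_le _ _).trans ?_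
        gcongr
        · refine (norm_mul_le _ _).trans ?_
          gcongr
          exact l2_opNorm_inv_le_of_algebraMap_le hc hA
        · exact l2_opNorm_inv_le_of_algebraMap_le hc hB
    _ = ‖B - A‖ * ‖WithLp.toLp 2 u‖ / c ^ 2 := by field_simp

lemma l2_opNorm_transpose_mul_mul_le [DecidableEq n] [DecidableEq p] (W : Matrix p n ℝ)
    (D : Matrix p p ℝ) : ‖Wᵀ * D * W‖ ≤ ‖W‖ * ‖D‖ * ‖W‖ := by
  refine (l2_opNorm_mul _ _).trans ?_
  gcongr
  refine (l2_opNorm_mul _ _).trans ?_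
  rw [← conjTranspose_eq_transpose_of_trivial, l2_opNorm_conjTranspose]

end Matrix

lemma specNorm_eq_l2_opNorm {m n : ℕ} (A : Matrix (Fin m) (Fin n) ℝ) : specNorm A = ‖A‖ := rfl

theorem stmt_12_general {M d p : ℕ} [NeZero d] (H : Matrix (Fin M) (Fin d) ℝ)
    (W : Matrix (Fin p) (Fin d) ℝ) (hW : specNorm W = 1)
    (hker : ∀ x : Fin d → ℝ, H *ᵥ x = 0 → W *ᵥ x = 0 → x = 0)
    (lam ε L : ℝ) (hlam : 0 < lam) (hε : 0 < ε)
    (m : (Fin d → ℝ) → (Fin p → ℝ))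
    (hm : ∀ x i, ε ≤ (m x i) ^ 2 ∧ (m x i) ^ 2 ≤ 1)
    (hmlip : ∀ x₁ x₂ : Fin d → ℝ,
      specNorm ((diagonal (m x₁)) ^ 2 - (diagonal (m x₂)) ^ 2) ≤ L * ‖e x₁ - e x₂‖)
    (hsym : (Hᵀ * H + (lam * ε) • (Wᵀ * W)).IsHermitian)
    (lamε : ℝ) (hlamε : lamε = ⨅ i, hsym.eigenvalues i)
    (y : Fin M → ℝ)
    (T : (Fin d → ℝ) → (Fin d → ℝ))
    (hT : ∀ x, T x = (Hᵀ * H + lam • (Wᵀ * (diagonal (m x)) ^ 2 * W))⁻¹ *ᵥ (Hᵀ *ᵥ y)) :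
    ∀ x₁ x₂ : Fin d → ℝ,
      ‖e (T x₁) - e (T x₂)‖ ≤ (lam * L * ‖e (Hᵀ *ᵥ y)‖ / lamε ^ 2) * ‖e x₁ - e x₂‖ := by
  intro x₁ x₂
  obtain ⟨A, hA⟩ : ∃ A : (Fin d → ℝ) → Matrix (Fin d) (Fin d) ℝ,
      ∀ x, A x = Hᵀ * H + lam • (Wᵀ * diagonal (m x) ^ 2 * W) := ⟨_, fun _ ↦ rfl⟩
  have hlamε_pos : 0 < lamε := hlamε ▸
    iInf_eigenvalues_pos hsym (posDef_transpose_mul_self_add_smul hker (mul_pos hlam hε))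
  have hcoercive (x : Fin d → ℝ) : algebraMap ℝ _ lamε ≤ A x := by
    refine hlamε ▸ (algebraMap_iInf_eigenvalues_le hsym).trans ?_
    rw [hA, diagonal_pow]
    exact transpose_mul_self_add_smul_le H W hlam.le fun i ↦ (hm x i).1
  have hdiff : ‖A x₂ - A x₁‖ ≤ lam * (L * ‖e x₁ - e x₂‖) := by
    rw [hA, hA, add_sub_add_left_eq_sub, ← smul_sub, ← Matrix.sub_mul, ← Matrix.mul_sub,
      norm_smul, Real.norm_of_nonneg hlam.le]
    gcongr
    refine (l2_opNorm_transpose_mul_mul_le W _).trans ?_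
    rw [← specNorm_eq_l2_opNorm W, hW, one_mul, mul_one, norm_sub_rev (e x₁)]
    exact hmlip x₂ x₁
  rw [hT, hT, ← hA, ← hA]
  calc ‖e _ - e _‖ ≤ ‖A x₂ - A x₁‖ * ‖e (Hᵀ *ᵥ y)‖ / lamε ^ 2 :=
        norm_inv_mulVec_sub_inv_mulVec_le hlamε_pos (hcoercive x₁) (hcoercive x₂) _
    _ ≤ lam * (L * ‖e x₁ - e x₂‖) * ‖e (Hᵀ *ᵥ y)‖ / lamε ^ 2 := by gcongr
    _ = _ := by ring

theorem stmt_12 {M d p : ℕ} [NeZero d] (H : Matrix (Fin M) (Fin d) ℝ)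
    (W : Matrix (Fin p) (Fin d) ℝ) (hW : specNorm W = 1)
    (hker : ∀ x : Fin d → ℝ, H *ᵥ x = 0 → W *ᵥ x = 0 → x = 0)
    (lam ε L : ℝ) (hlam : 0 < lam) (hε : 0 < ε) (hL : 0 ≤ L)
    (m : (Fin d → ℝ) → (Fin p → ℝ))
    (hm : ∀ x i, ε ≤ (m x i) ^ 2 ∧ (m x i) ^ 2 ≤ 1)
    (hmlip : ∀ x₁ x₂ : Fin d → ℝ,
      specNorm ((diagonal (m x₁)) ^ 2 - (diagonal (m x₂)) ^ 2) ≤ L * ‖e x₁ - e x₂‖)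
    (hsym : (Hᵀ * H + (lam * ε) • (Wᵀ * W)).IsHermitian)
    (lamε : ℝ) (hlamε : lamε = ⨅ i, hsym.eigenvalues i)
    (y : Fin M → ℝ)
    (T : (Fin d → ℝ) → (Fin d → ℝ))
    (hT : ∀ x, T x = (Hᵀ * H + lam • (Wᵀ * (diagonal (m x)) ^ 2 * W))⁻¹ *ᵥ (Hᵀ *ᵥ y)) :
    ∀ x₁ x₂ : Fin d → ℝ,
      ‖e (T x₁) - e (T x₂)‖ ≤ (lam * L * ‖e (Hᵀ *ᵥ y)‖ / lamε ^ 2) * ‖e x₁ - e x₂‖ :=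
  stmt_12_general H W hW hker lam ε L hlam hε m hm hmlip hsym lamε hlamε y T hT
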